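/- arXiv:2602.06817 — 5 statements merged into one kernel-verified Lean document; each statement's English description precedes it below -/
import Mathlib

section
/- Let K be a field of characteristic zero, V ⊆ K̄ⁿ a finite set with multiplicities μ(x), t a linear form (injective or not), and χ_t(U₀) = ∏_{x∈V}(U₀ − t(x))^{μ(x)} = ∑_{j=0}^{D} b_j U₀^{D−j}. Define the i-th Hörner polynomial H_i(U₀) = ∑_{j=0}^{i} b_j U₀^{i−j}. Then for any polynomial function g on V, ∑_{x∈V} μ(x) g(x) · χ_t(U₀)/(U₀ − t(x)) = ∑_{i=0}^{D−1} (∑_{x∈V} μ(x) g(x) t(x)^i) · H_{D−i−1}(U₀), as an identity of polynomials in U₀. -/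
open Polynomial

lemma horner_step {F : Type*} [CommRing F] (b : ℕ → F) (H : ℕ → Polynomial F)
    (hH : ∀ i, H i = ∑ j ∈ Finset.range (i + 1), Polynomial.C (b j) * Polynomial.X ^ (i - j))
    (i : ℕ) : H (i + 1) = X * H i + C (b (i + 1)) := by
  rw [hH, hH, Finset.sum_range_succ, Finset.mul_sum]
  congr 1
  · apply Finset.sum_congr rfl
    intro j hj
    rw [Finset.mem_range] at hj
    have : i + 1 - j = (i - j) + 1 := by omega
    rw [this]
    ring
  · simp

lemma horner_key {F : Type*} [CommRing F] (b : ℕ → F) (H : ℕ → Polynomial F)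
    (hH : ∀ i, H i = ∑ j ∈ Finset.range (i + 1), Polynomial.C (b j) * Polynomial.X ^ (i - j))
    (α : F) (D : ℕ) :
    (X - C α) * ∑ i ∈ Finset.range D, C (α ^ i) * H (D - i - 1)
      = H D - C (Polynomial.eval α (H D)) := by
  induction D with
  | zero => simp [hH 0]
  | succ D ih =>
    have hs : ∑ i ∈ Finset.range (D + 1), C (α ^ i) * H (D + 1 - i - 1)
        = C α * (∑ i ∈ Finset.range D, C (α ^ i) * H (D - i - 1)) + H D := by
      rw [Finset.sum_range_succ', Finset.mul_sum]
      congr 1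
      · apply Finset.sum_congr rfl
        intro i _
        have h1 : D + 1 - (i + 1) - 1 = D - i - 1 := by omega
        rw [h1, pow_succ, map_mul]
        ring
      · simp
    rw [hs, horner_step b H hH D]
    have heval : Polynomial.eval α (X * H D + C (b (D + 1)))
        = α * Polynomial.eval α (H D) + b (D + 1) := by simp
    rw [heval, mul_add, mul_comm (C α), ← mul_assoc, ih]
    push_cast [map_add, map_mul]
    ring

/-- **Hörner-polynomial closed formula underlying the RUR coordinates** (Lemma `formules h_Xi`).
Let `K` have characteristic zero with algebraic closure `K̄`, `V ⊆ K̄ⁿ` finite with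
multiplicities `μ(x) ≥ 1`, `D = ∑ μ(x)`, `t` a linear form, and write
`χ_t(U₀) = ∏_{x∈V}(U₀ − t(x))^{μ(x)} = ∑_{j=0}^{D} b_j U₀^{D−j}`, with Hörner polynomials
`H_i(U₀) = ∑_{j=0}^{i} b_j U₀^{i−j}`. Then for any function `g` on `V`,
`∑_{x∈V} μ(x)·g(x)·χ_t(U₀)/(U₀ − t(x)) = ∑_{i=0}^{D−1} (∑_{x∈V} μ(x)·g(x)·t(x)^i)·H_{D−i−1}(U₀)`,
where `χ_t(U₀)/(U₀−t(x))` denotes `(U₀−t(x))^{μ(x)−1}·∏_{y≠x}(U₀−t(y))^{μ(y)}`. -/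
theorem horner_formula_for_rur_coordinates
    (K : Type*) [Field K] [CharZero K] (n : ℕ)
    [DecidableEq (Fin n → AlgebraicClosure K)]
    (V : Finset (Fin n → AlgebraicClosure K)) (μ : (Fin n → AlgebraicClosure K) → ℕ)
    (hμ : ∀ x ∈ V, 1 ≤ μ x) (D : ℕ) (hD : D = ∑ x ∈ V, μ x)
    (a : Fin n → K)
    (t : (Fin n → AlgebraicClosure K) → AlgebraicClosure K)
    (ht : t = fun x => ∑ i, algebraMap K (AlgebraicClosure K) (a i) * x i)
    (b : ℕ → AlgebraicClosure K)
    (hb : ∏ x ∈ V, (Polynomial.X - Polynomial.C (t x)) ^ (μ x)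
      = ∑ j ∈ Finset.range (D + 1), Polynomial.C (b j) * Polynomial.X ^ (D - j))
    (H : ℕ → Polynomial (AlgebraicClosure K))
    (hH : ∀ i, H i = ∑ j ∈ Finset.range (i + 1), Polynomial.C (b j) * Polynomial.X ^ (i - j))
    (g : (Fin n → AlgebraicClosure K) → AlgebraicClosure K) :
    ∑ x ∈ V, Polynomial.C ((μ x : AlgebraicClosure K) * g x) *
        ((Polynomial.X - Polynomial.C (t x)) ^ (μ x - 1) *
          ∏ y ∈ V.erase x, (Polynomial.X - Polynomial.C (t y)) ^ (μ y))
      = ∑ i ∈ Finset.range D,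
          Polynomial.C (∑ x ∈ V, (μ x : AlgebraicClosure K) * g x * (t x) ^ i) *
            H (D - i - 1) := by
  have hHD : H D = ∏ x ∈ V, (X - C (t x)) ^ (μ x) := by rw [hH D, ← hb]
  have hQ : ∀ x ∈ V,
      (X - C (t x)) ^ (μ x - 1) * ∏ y ∈ V.erase x, (X - C (t y)) ^ (μ y)
        = ∑ i ∈ Finset.range D, C ((t x) ^ i) * H (D - i - 1) := by
    intro x hx
    apply mul_left_cancel₀ (X_sub_C_ne_zero (t x))
    rw [horner_key b H hH (t x) D]
    have hroot : Polynomial.eval (t x) (H D) = 0 := by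
      rw [hHD, Polynomial.eval_prod]
      apply Finset.prod_eq_zero hx
      simp [zero_pow (by have := hμ x hx; omega : μ x ≠ 0)]
    rw [hroot, map_zero, sub_zero, hHD, ← mul_assoc, ← pow_succ',
      Nat.sub_add_cancel (hμ x hx)]
    exact Finset.mul_prod_erase V (fun y => (X - C (t y)) ^ μ y) hx
  calc ∑ x ∈ V, Polynomial.C ((μ x : AlgebraicClosure K) * g x) *
        ((X - C (t x)) ^ (μ x - 1) * ∏ y ∈ V.erase x, (X - C (t y)) ^ (μ y))
      = ∑ x ∈ V, ∑ i ∈ Finset.range D,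
          C ((μ x : AlgebraicClosure K) * g x * (t x) ^ i) * H (D - i - 1) := by
        apply Finset.sum_congr rfl
        intro x hx
        rw [hQ x hx, Finset.mul_sum]
        apply Finset.sum_congr rfl
        intro i _
        simp only [map_mul]
        ring
    _ = _ := by
        rw [Finset.sum_comm]
        apply Finset.sum_congr rfl
        intro i _
        rw [map_sum, Finset.sum_mul]
end

section
/- Let q ≥ 1, κ ≥ 0, s ≥ 1 be integers and let k₀ = ⌈q + (κ+1)^s / q^{s−1}⌉. Then k₀^s − q·k₀^{s−1} ≥ (κ+1)^s. Consequently, if F ∈ ℚ[W₁,…,W_s] is a nonzero polynomial of total degree at most q, the grid {1,…,k₀}^s contains at least (κ+1)^s points where F does not vanish. -/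
open MvPolynomial Finset

lemma sz_aux {K : Type*} [Field K] [DecidableEq K] :
    ∀ (n : ℕ) (F : MvPolynomial (Fin n) K), F ≠ 0 → ∀ S : Finset K,
    ((Fintype.piFinset fun _ : Fin n => S).filter (fun w => eval w F = 0)).card * S.card
      ≤ F.totalDegree * S.card ^ n := by
  intro n
  induction n with
  | zero =>
    intro F hF S
    have h0 : ((Fintype.piFinset fun _ : Fin 0 => S).filter (fun w => eval w F = 0)) = ∅ := by
      apply Finset.filter_false_of_mem
      intro w _
      rw [eq_C_of_isEmpty F]
      simp only [eval_C]
      intro h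
      exact hF (by rw [eq_C_of_isEmpty F, h, map_zero])
    rw [h0]
    simp
  | succ n ih =>
    intro F hF S
    set P := finSuccEquiv K n F with hP
    have hPne : P ≠ 0 := by
      simpa [hP] using (map_ne_zero_iff _ (finSuccEquiv K n).injective).2 hF
    set d := P.natDegree with hd
    set c := P.coeff d with hc
    have hcne : c ≠ 0 := by
      simpa [hc, hd] using Polynomial.leadingCoeff_ne_zero.2 hPne
    have hdeg : c.totalDegree + d ≤ F.totalDegree :=
      totalDegree_coeff_finSuccEquiv_add_le F d hcne
    set gridn := (Fintype.piFinset fun _ : Fin n => S) with hgridn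
    have hgcard : gridn.card = S.card ^ n := by
      rw [hgridn, Fintype.card_piFinset]; simp
    set A := (S ×ˢ gridn).filter (fun p : K × (Fin n → K) => eval (Fin.cons p.1 p.2) F = 0)
      with hA
    have hmemA : ∀ p : K × (Fin n → K),
        p ∈ A ↔ (p.1 ∈ S ∧ p.2 ∈ gridn) ∧ eval (Fin.cons p.1 p.2) F = 0 := by
      intro p
      rw [hA, Finset.mem_filter, Finset.mem_product]
    have hcard : ((Fintype.piFinset fun _ : Fin (n+1) => S).filter
        (fun w => eval w F = 0)).card = A.card := by
      apply Finset.card_bij (fun w _ => (w 0, Fin.tail w))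
      · intro w hw
        rw [Finset.mem_filter, Fintype.mem_piFinset] at hw
        rw [hmemA]
        refine ⟨⟨hw.1 0, Fintype.mem_piFinset.2 fun i => hw.1 i.succ⟩, ?_⟩
        rw [Fin.cons_self_tail]
        exact hw.2
      · intro w₁ h₁ w₂ h₂ h
        have h1 := congrArg Prod.fst h
        have h2 := congrArg Prod.snd h
        simp only at h1 h2
        funext i
        refine Fin.cases h1 (fun j => congrFun h2 j) i
      · intro p hp
        rw [hmemA] at hp
        refine ⟨Fin.cons p.1 p.2, ?_, ?_⟩
        · rw [Finset.mem_filter, Fintype.mem_piFinset]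
          exact ⟨fun i => Fin.cases hp.1.1 (fun j => Fintype.mem_piFinset.1 hp.1.2 j) i, hp.2⟩
        · simp [Fin.tail_cons]
    set A₁ := A.filter (fun p : K × (Fin n → K) => eval p.2 c = 0) with hA₁
    set A₂ := A.filter (fun p : K × (Fin n → K) => ¬ eval p.2 c = 0) with hA₂
    have hsplit : A.card = A₁.card + A₂.card :=
      (Finset.card_filter_add_card_filter_not (s := A)
        (p := fun p : K × (Fin n → K) => eval p.2 c = 0)).symm
    have hA₁sub : A₁ ⊆ S ×ˢ (gridn.filter (fun y => eval y c = 0)) := by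
      intro p hp
      rw [hA₁, Finset.mem_filter, hmemA] at hp
      rw [Finset.mem_product, Finset.mem_filter]
      exact ⟨hp.1.1.1, hp.1.1.2, hp.2⟩
    have hA₁card : A₁.card * S.card ≤ c.totalDegree * S.card ^ (n + 1) := by
      calc A₁.card * S.card
          ≤ (S.card * (gridn.filter (fun y => eval y c = 0)).card) * S.card :=
            Nat.mul_le_mul_right _ (le_trans (Finset.card_le_card hA₁sub)
              (le_of_eq (Finset.card_product _ _)))
        _ = ((gridn.filter (fun y => eval y c = 0)).card * S.card) * S.card := by ring
        _ ≤ (c.totalDegree * S.card ^ n) * S.card := Nat.mul_le_mul_right _ (ih c hcne S)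
        _ = c.totalDegree * S.card ^ (n + 1) := by ring
    have hA₂card : A₂.card ≤ S.card ^ n * d := by
      rw [Finset.card_eq_sum_card_fiberwise (f := Prod.snd) (t := gridn)
        (fun p hp => by
          rw [hA₂, Finset.mem_coe, Finset.mem_filter, hmemA] at hp
          exact hp.1.1.2)]
      calc ∑ y ∈ gridn, (A₂.filter fun p => p.2 = y).card
          ≤ ∑ _y ∈ gridn, d := by
            apply Finset.sum_le_sum
            intro y _
            by_cases hyc : eval y c = 0
            · have hempty : A₂.filter (fun p => p.2 = y) = ∅ := by
                rw [Finset.eq_empty_iff_forall_notMem]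
                intro p hp
                rw [Finset.mem_filter, hA₂, Finset.mem_filter] at hp
                exact hp.1.2 (hp.2 ▸ hyc)
              rw [hempty]
              exact Nat.zero_le _
            · set py := P.map (eval y) with hpy
              have hpyl : py.coeff d ≠ 0 := by
                rw [hpy, Polynomial.coeff_map]
                exact hyc
              have hpyd : py.natDegree = d :=
                Polynomial.natDegree_map_of_leadingCoeff_ne_zero _ hyc
              have hpyne : py ≠ 0 := fun h => hpyl (by simp [h])
              refine le_trans (Finset.card_le_card_of_injOn (t := py.roots.toFinset) (fun p => p.1) ?_ ?_) ?_
              · intro p hp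
                rw [Finset.mem_coe, Finset.mem_filter, hA₂, Finset.mem_filter, hmemA] at hp
                rw [Finset.mem_coe, Multiset.mem_toFinset, Polynomial.mem_roots hpyne]
                have := hp.1.1.2
                rw [hp.2] at this
                rw [Polynomial.IsRoot, ← eval_eq_eval_mv_eval']
                exact this
              · intro p₁ h₁ p₂ h₂ hfst
                rw [Finset.mem_coe, Finset.mem_filter] at h₁ h₂
                exact Prod.ext hfst (h₁.2.trans h₂.2.symm)
              · exact le_trans py.roots.toFinset_card_le
                  (le_trans (Polynomial.card_roots' py) (le_of_eq hpyd))
        _ = gridn.card * d := by rw [Finset.sum_const, smul_eq_mul]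
        _ = S.card ^ n * d := by rw [hgcard]
    calc ((Fintype.piFinset fun _ : Fin (n+1) => S).filter (fun w => eval w F = 0)).card * S.card
        = (A₁.card + A₂.card) * S.card := by rw [hcard, hsplit]
      _ = A₁.card * S.card + A₂.card * S.card := by ring
      _ ≤ c.totalDegree * S.card ^ (n+1) + (S.card ^ n * d) * S.card :=
          Nat.add_le_add hA₁card (Nat.mul_le_mul_right _ hA₂card)
      _ = (c.totalDegree + d) * S.card ^ (n+1) := by ring
      _ ≤ F.totalDegree * S.card ^ (n+1) := Nat.mul_le_mul_right _ hdeg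


/-- **Grid size estimate for finding non-vanishing points.**
Let `q ≥ 1`, `κ ≥ 0`, `s ≥ 1` and `k₀ = ⌈q + (κ+1)^s / q^{s−1}⌉`. Then
`k₀^s − q·k₀^{s−1} ≥ (κ+1)^s`, and consequently, for every nonzero polynomial
`F ∈ ℚ[W₁,…,W_s]` of total degree at most `q`, the grid `{1,…,k₀}^s` contains at least
`(κ+1)^s` points where `F` does not vanish. -/
theorem grid_contains_enough_nonvanishing_points
    (q κ s : ℕ) (hq : 1 ≤ q) (hs : 1 ≤ s)
    (k₀ : ℕ) (hk₀ : k₀ = ⌈(q : ℝ) + ((κ : ℝ) + 1) ^ s / (q : ℝ) ^ (s - 1)⌉₊) :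
    (κ + 1) ^ s + q * k₀ ^ (s - 1) ≤ k₀ ^ s ∧
    ∀ F : MvPolynomial (Fin s) ℚ, F ≠ 0 → F.totalDegree ≤ q →
      (κ + 1) ^ s ≤
        ((Fintype.piFinset fun _ : Fin s => (Finset.Icc 1 k₀).image (fun i : ℕ => (i : ℚ))).filter
          (fun w => MvPolynomial.eval w F ≠ 0)).card := by
  obtain ⟨t, rfl⟩ : ∃ t, s = t + 1 := ⟨s - 1, (Nat.succ_pred_eq_of_pos hs).symm⟩
  have hts : t + 1 - 1 = t := rfl
  rw [hts] at hk₀ ⊢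
  -- Part 1
  have hqR : (0:ℝ) < q := by exact_mod_cast hq
  set r : ℝ := ((κ : ℝ) + 1) ^ (t+1) / (q : ℝ) ^ t with hr
  have hrpos : 0 ≤ r := by positivity
  have hceil : (q : ℝ) + r ≤ (k₀ : ℝ) := by
    rw [hk₀]
    exact Nat.le_ceil _
  have hkq : (q : ℝ) ≤ (k₀ : ℝ) := by linarith
  have hkt : (q : ℝ) ^ t ≤ (k₀ : ℝ) ^ t := pow_le_pow_left₀ (le_of_lt hqR) hkq t
  have hmain : ((κ:ℝ) + 1) ^ (t+1) + (q:ℝ) * (k₀:ℝ) ^ t ≤ (k₀:ℝ) ^ (t+1) := by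
    have h1 : (k₀:ℝ) ^ t * ((q:ℝ) + r) ≤ (k₀:ℝ) ^ t * (k₀:ℝ) := by
      apply mul_le_mul_of_nonneg_left hceil (by positivity)
    have h2 : (q:ℝ) ^ t * r ≤ (k₀:ℝ) ^ t * r := mul_le_mul_of_nonneg_right hkt hrpos
    have h3 : (q:ℝ) ^ t * r = ((κ:ℝ) + 1) ^ (t+1) := by
      rw [hr]
      field_simp
    have hpow : (k₀:ℝ) ^ t * (k₀:ℝ) = (k₀:ℝ) ^ (t+1) := (pow_succ _ _).symm
    nlinarith
  have part1 : (κ + 1) ^ (t+1) + q * k₀ ^ t ≤ k₀ ^ (t+1) := by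
    exact_mod_cast hmain
  refine ⟨part1, ?_⟩
  -- Part 2
  intro F hF hdegF
  have hk₀pos : 0 < k₀ := by
    rcases Nat.eq_zero_or_pos k₀ with h | h
    · exfalso
      rw [h] at part1
      simp at part1
    · exact h
  set S : Finset ℚ := (Finset.Icc 1 k₀).image (fun i : ℕ => (i : ℚ)) with hS
  have hScard : S.card = k₀ := by
    rw [hS, Finset.card_image_of_injective _ Nat.cast_injective,
      Nat.card_Icc]
    omega
  have hgrid : (Fintype.piFinset fun _ : Fin (t+1) => S).card = k₀ ^ (t+1) := by
    rw [Fintype.card_piFinset]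
    simp [hScard]
  have hzeros := sz_aux (t+1) F hF S
  rw [hScard] at hzeros
  have hzle : ((Fintype.piFinset fun _ : Fin (t+1) => S).filter
      (fun w => eval w F = 0)).card ≤ q * k₀ ^ t := by
    apply Nat.le_of_mul_le_mul_right _ hk₀pos
    calc ((Fintype.piFinset fun _ : Fin (t+1) => S).filter
        (fun w => eval w F = 0)).card * k₀ ≤ F.totalDegree * k₀ ^ (t+1) := hzeros
      _ ≤ q * k₀ ^ (t+1) := Nat.mul_le_mul_right _ hdegF
      _ = (q * k₀ ^ t) * k₀ := by ring
  have hsplit := Finset.card_filter_add_card_filter_not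
    (s := Fintype.piFinset fun _ : Fin (t+1) => S) (p := fun w => eval w F = 0)
  have : ((Fintype.piFinset fun _ : Fin (t+1) => S).filter
      (fun w => ¬ eval w F = 0)).card
      = ((Fintype.piFinset fun _ : Fin (t+1) => S).filter
      (fun w => eval w F ≠ 0)).card := rfl
  rw [this, hgrid] at hsplit
  omega
end

section
/- Height of composition: let f₁,…,f_r ∈ ℤ[x₁,…,x_k] have total degrees at most d and heights at most τ, and let g ∈ ℤ[y₁,…,y_r]. Then 𝔥(g(f₁,…,f_r)) ≤ 𝔥(g) + deg(g)·(τ + log₂(r+1) + d·log₂(k+1)). -/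
open MvPolynomial

/-- The sup-norm `‖f‖_∞` of an integer multivariate polynomial: the maximum of the
absolute values of its coefficients. -/
noncomputable def supNorm {k : ℕ} (f : MvPolynomial (Fin k) ℤ) : ℕ :=
  f.support.sup fun m => (f.coeff m).natAbs

/-- The height `𝔥(f) = log₂ ‖f‖_∞` of an integer multivariate polynomial. -/
noncomputable def polyHeight {k : ℕ} (f : MvPolynomial (Fin k) ℤ) : ℝ :=
  Real.logb 2 (supNorm f)

namespace HeightComp

lemma natAbs_sum_le {ι : Type*} (s : Finset ι) (f : ι → ℤ) :
    (∑ i ∈ s, f i).natAbs ≤ ∑ i ∈ s, (f i).natAbs := by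
  classical
  induction s using Finset.cons_induction with
  | empty => simp
  | cons a s ha ih =>
    rw [Finset.sum_cons, Finset.sum_cons]
    exact le_trans (Int.natAbs_add_le _ _) (Nat.add_le_add_left ih _)

variable {σ : Type*}

/-- Coefficientwise absolute value, as an `ℕ`-polynomial. -/
noncomputable def pabs (p : MvPolynomial σ ℤ) : MvPolynomial σ ℕ :=
  AddMonoidAlgebra.ofCoeff (Finsupp.mapRange Int.natAbs Int.natAbs_zero (AddMonoidAlgebra.coeff p))

lemma coeff_pabs (p : MvPolynomial σ ℤ) (m : σ →₀ ℕ) :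
    (pabs p).coeff m = (p.coeff m).natAbs :=
  Finsupp.mapRange_apply (hf := Int.natAbs_zero)

lemma support_pabs (p : MvPolynomial σ ℤ) : (pabs p).support = p.support := by
  ext m
  simp [MvPolynomial.mem_support_iff, coeff_pabs, Int.natAbs_eq_zero]

/-- Monotonicity of evaluation (over `ℕ`) in the coefficients. -/
lemma eval_mono_coeff (p q : MvPolynomial σ ℕ) (y : σ → ℕ)
    (h : ∀ m, p.coeff m ≤ q.coeff m) : eval y p ≤ eval y q := by
  classical
  rw [eval_eq, eval_eq]
  have h1 : ∑ d ∈ p.support, p.coeff d * ∏ i ∈ d.support, y i ^ d i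
      = ∑ d ∈ p.support ∪ q.support, p.coeff d * ∏ i ∈ d.support, y i ^ d i := by
    refine Finset.sum_subset Finset.subset_union_left ?_
    intro m _ hm
    rw [MvPolynomial.notMem_support_iff.mp hm, zero_mul]
  have h2 : ∑ d ∈ q.support, q.coeff d * ∏ i ∈ d.support, y i ^ d i
      = ∑ d ∈ p.support ∪ q.support, q.coeff d * ∏ i ∈ d.support, y i ^ d i := by
    refine Finset.sum_subset Finset.subset_union_right ?_
    intro m _ hm
    rw [MvPolynomial.notMem_support_iff.mp hm, zero_mul]
  rw [h1, h2]
  exact Finset.sum_le_sum fun m _ => Nat.mul_le_mul_right _ (h m)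

/-- Monotonicity of evaluation (over `ℕ`) in the point. -/
lemma eval_mono_pt (p : MvPolynomial σ ℕ) (y y' : σ → ℕ) (h : ∀ i, y i ≤ y' i) :
    eval y p ≤ eval y' p := by
  rw [eval_eq, eval_eq]
  refine Finset.sum_le_sum fun m _ => Nat.mul_le_mul_left _ ?_
  exact Finset.prod_le_prod' fun i _ => Nat.pow_le_pow_left (h i) _

/-- The ℓ¹ norm of an integer polynomial. -/
noncomputable def mu (p : MvPolynomial σ ℤ) : ℕ := eval (fun _ => 1) (pabs p)

lemma coeff_pabs_mul_le [DecidableEq σ] (p q : MvPolynomial σ ℤ) (m : σ →₀ ℕ) :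
    (pabs (p * q)).coeff m ≤ (pabs p * pabs q).coeff m := by
  rw [coeff_pabs, MvPolynomial.coeff_mul, MvPolynomial.coeff_mul]
  refine le_trans (natAbs_sum_le _ _) (le_of_eq (Finset.sum_congr rfl fun x _ => ?_))
  rw [Int.natAbs_mul, coeff_pabs, coeff_pabs]

lemma mu_add_le (p q : MvPolynomial σ ℤ) : mu (p + q) ≤ mu p + mu q := by
  have h : ∀ m, (pabs (p + q)).coeff m ≤ (pabs p + pabs q).coeff m := by
    intro m
    rw [coeff_pabs, MvPolynomial.coeff_add, MvPolynomial.coeff_add, coeff_pabs, coeff_pabs]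
    exact Int.natAbs_add_le _ _
  have := eval_mono_coeff _ _ (fun _ => 1) h
  simpa [mu, map_add] using this

lemma mu_mul_le [DecidableEq σ] (p q : MvPolynomial σ ℤ) : mu (p * q) ≤ mu p * mu q := by
  have := eval_mono_coeff _ _ (fun _ => 1) (coeff_pabs_mul_le p q)
  simpa [mu, map_mul] using this

lemma pabs_C (c : ℤ) : pabs (C c : MvPolynomial σ ℤ) = C c.natAbs := by
  classical
  apply MvPolynomial.ext
  intro m
  rw [coeff_pabs, MvPolynomial.coeff_C, MvPolynomial.coeff_C]
  split <;> simp

lemma mu_C (c : ℤ) : mu (C c : MvPolynomial σ ℤ) = c.natAbs := by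
  rw [mu, pabs_C, eval_C]

lemma mu_zero : mu (0 : MvPolynomial σ ℤ) = 0 := by
  simpa using mu_C (0 : ℤ) (σ := σ)

lemma mu_sum_le {ι : Type*} (s : Finset ι) (h : ι → MvPolynomial σ ℤ) :
    mu (∑ i ∈ s, h i) ≤ ∑ i ∈ s, mu (h i) := by
  classical
  induction s using Finset.cons_induction with
  | empty => simp [mu_zero]
  | cons a s ha ih =>
    rw [Finset.sum_cons, Finset.sum_cons]
    exact le_trans (mu_add_le _ _) (Nat.add_le_add_left ih _)

lemma mu_one : mu (1 : MvPolynomial σ ℤ) = 1 := by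
  simpa using mu_C (1 : ℤ) (σ := σ)

lemma mu_pow_le [DecidableEq σ] (p : MvPolynomial σ ℤ) (n : ℕ) : mu (p ^ n) ≤ mu p ^ n := by
  induction n with
  | zero => simp [mu_one]
  | succ n ih =>
    rw [pow_succ, pow_succ]
    exact le_trans (mu_mul_le _ _) (Nat.mul_le_mul_right _ ih)

lemma mu_prod_le {ι : Type*} [DecidableEq σ] (s : Finset ι) (h : ι → MvPolynomial σ ℤ) :
    mu (∏ i ∈ s, h i) ≤ ∏ i ∈ s, mu (h i) := by
  classical
  induction s using Finset.cons_induction with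
  | empty => simp [mu_one]
  | cons a s ha ih =>
    rw [Finset.prod_cons, Finset.prod_cons]
    exact le_trans (mu_mul_le _ _) (Nat.mul_le_mul_left _ ih)

/-- The polynomial `1 + x₁ + ⋯ + x_k` over `ℕ`. -/
noncomputable def onePlus (σ : Type*) [Fintype σ] : MvPolynomial σ ℕ := 1 + ∑ i, X i

lemma le_coeff_mul (p q : MvPolynomial σ ℕ) (a b : σ →₀ ℕ) [DecidableEq σ] :
    p.coeff a * q.coeff b ≤ (p * q).coeff (a + b) := by
  rw [MvPolynomial.coeff_mul]
  have hmem : ((a, b) : (σ →₀ ℕ) × (σ →₀ ℕ)) ∈ Finset.HasAntidiagonal.antidiagonal (a + b) :=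
    Finset.HasAntidiagonal.mem_antidiagonal.mpr rfl
  exact Finset.single_le_sum (f := fun x => p.coeff x.1 * q.coeff x.2)
    (fun _ _ => Nat.zero_le _) hmem

lemma coeff_zero_onePlus [Fintype σ] [DecidableEq σ] :
    (onePlus σ).coeff 0 = 1 := by
  rw [onePlus, MvPolynomial.coeff_add, MvPolynomial.coeff_sum]
  simp [MvPolynomial.coeff_X']

lemma coeff_single_onePlus [Fintype σ] [DecidableEq σ] (a : σ) :
    (onePlus σ).coeff (Finsupp.single a 1) = 1 := by
  rw [onePlus, MvPolynomial.coeff_add, MvPolynomial.coeff_sum]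
  have h0 : MvPolynomial.coeff (Finsupp.single a 1) (1 : MvPolynomial σ ℕ) = 0 := by
    rw [MvPolynomial.coeff_one]
    simp [eq_comm, Finsupp.single_eq_zero]
  rw [h0, zero_add]
  rw [Finset.sum_eq_single a]
  · simp [MvPolynomial.coeff_X]
  · intro b _ hb
    rw [MvPolynomial.coeff_X']
    simp [Finsupp.single_eq_single_iff, hb]
  · simp

lemma one_le_coeff_onePlus_pow [Fintype σ] [DecidableEq σ] (D : ℕ) (m : σ →₀ ℕ)
    (hm : (m.sum fun _ e => e) ≤ D) :
    1 ≤ ((onePlus σ) ^ D).coeff m := by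
  induction D generalizing m with
  | zero =>
    have hm0 : m = 0 := by
      ext a
      have : m a ≤ m.sum fun _ e => e := by
        by_cases h : a ∈ m.support
        · exact Finset.single_le_sum (f := fun a => m a) (fun _ _ => Nat.zero_le _) h
        · simp [Finsupp.notMem_support_iff.mp h]
      simp only [Finsupp.coe_zero, Pi.zero_apply]
      omega
    simp [hm0]
  | succ D ih =>
    by_cases hle : (m.sum fun _ e => e) ≤ D
    · have h1 := ih m hle
      have h2 : (onePlus σ ^ D).coeff m * (onePlus σ).coeff 0
          ≤ (onePlus σ ^ D * onePlus σ).coeff (m + 0) := le_coeff_mul _ _ _ _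
      rw [coeff_zero_onePlus, mul_one, add_zero, ← pow_succ] at h2
      omega
    · -- m has positive total degree; pick a with m a ≠ 0
      have hpos : m ≠ 0 := by
        intro h0
        apply hle
        simp [h0]
      obtain ⟨a, ha⟩ : ∃ a, m a ≠ 0 := by
        by_contra h
        push_neg at h
        exact hpos (Finsupp.ext fun a => h a)
      set m' := m - Finsupp.single a 1 with hm'
      have hsle : Finsupp.single a 1 ≤ m := by
        rw [Finsupp.single_le_iff]
        omega
      have hrec : m' + Finsupp.single a 1 = m := tsub_add_cancel_of_le hsle
      have hsum : (m'.sum fun _ e => e) ≤ D := by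
        have : (m'.sum fun _ e => e) + ((Finsupp.single a 1).sum fun _ e => e)
            = m.sum fun _ e => e := by
          rw [← hrec]
          exact (Finsupp.sum_add_index' (fun _ => rfl) (fun _ _ _ => rfl)).symm
        have hsingle : ((Finsupp.single a 1).sum fun _ e => e) = 1 := by
          rw [Finsupp.sum_single_index]; rfl
        omega
      have h1 := ih m' hsum
      calc (1 : ℕ) = 1 * 1 := rfl
        _ ≤ ((onePlus σ ^ D).coeff m') * ((onePlus σ).coeff (Finsupp.single a 1)) := by
              rw [coeff_single_onePlus]
              exact Nat.mul_le_mul h1 le_rfl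
        _ ≤ (onePlus σ ^ D * onePlus σ).coeff (m' + Finsupp.single a 1) := le_coeff_mul _ _ _ _
        _ = ((onePlus σ) ^ (D + 1)).coeff m := by rw [hrec, ← pow_succ]

/-- Coefficientwise domination by `c · (1 + ∑ xᵢ)^D`. -/
lemma coeff_le_C_mul_onePlus_pow [Fintype σ] [DecidableEq σ] (p : MvPolynomial σ ℕ) (c D : ℕ)
    (hc : ∀ m ∈ p.support, p.coeff m ≤ c)
    (hD : ∀ m ∈ p.support, (m.sum fun _ e => e) ≤ D) (m : σ →₀ ℕ) :
    p.coeff m ≤ (C c * (onePlus σ) ^ D).coeff m := by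
  by_cases hm : m ∈ p.support
  · rw [MvPolynomial.coeff_C_mul]
    calc p.coeff m ≤ c := hc m hm
      _ = c * 1 := (mul_one c).symm
      _ ≤ c * ((onePlus σ) ^ D).coeff m :=
          Nat.mul_le_mul_left _ (one_le_coeff_onePlus_pow D m (hD m hm))
  · rw [MvPolynomial.notMem_support_iff.mp hm]
    exact Nat.zero_le _

lemma eval_onePlus_pow {n : ℕ} (c D : ℕ) :
    eval (fun _ => c) ((onePlus (Fin n)) ^ D) = (1 + n * c) ^ D := by
  rw [map_pow, onePlus, map_add, map_one, map_sum]
  simp [Finset.sum_const, mul_comm]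

/-- Master bound: `μ(g(f)) ≤ (pabs g)(μ(f₁),…,μ(f_r))`. -/
lemma mu_aeval_le {k r : ℕ} (f : Fin r → MvPolynomial (Fin k) ℤ)
    (g : MvPolynomial (Fin r) ℤ) :
    mu (aeval f g) ≤ eval (fun i => mu (f i)) (pabs g) := by
  classical
  rw [aeval_def, eval₂_eq]
  calc mu (∑ m ∈ g.support, (algebraMap ℤ (MvPolynomial (Fin k) ℤ)) (g.coeff m)
          * ∏ i ∈ m.support, f i ^ m i)
      ≤ ∑ m ∈ g.support, mu ((algebraMap ℤ (MvPolynomial (Fin k) ℤ)) (g.coeff m)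
          * ∏ i ∈ m.support, f i ^ m i) := mu_sum_le _ _
    _ ≤ ∑ m ∈ g.support, (g.coeff m).natAbs * ∏ i ∈ m.support, (mu (f i)) ^ m i := by
        refine Finset.sum_le_sum fun m _ => ?_
        calc mu ((algebraMap ℤ (MvPolynomial (Fin k) ℤ)) (g.coeff m)
                * ∏ i ∈ m.support, f i ^ m i)
            ≤ mu ((algebraMap ℤ (MvPolynomial (Fin k) ℤ)) (g.coeff m))
                * mu (∏ i ∈ m.support, f i ^ m i) := mu_mul_le _ _
          _ = (g.coeff m).natAbs * mu (∏ i ∈ m.support, f i ^ m i) := by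
                rw [MvPolynomial.algebraMap_eq, mu_C]
          _ ≤ (g.coeff m).natAbs * ∏ i ∈ m.support, (mu (f i)) ^ m i := by
                refine Nat.mul_le_mul_left _ ?_
                refine le_trans (mu_prod_le _ _) ?_
                exact Finset.prod_le_prod' fun i _ => mu_pow_le _ _
    _ = eval (fun i => mu (f i)) (pabs g) := by
        rw [eval_eq, support_pabs]
        exact Finset.sum_congr rfl fun m _ => by rw [coeff_pabs]

lemma supNorm_le_mu {k : ℕ} (p : MvPolynomial (Fin k) ℤ) : supNorm p ≤ mu p := by
  apply Finset.sup_le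
  intro m hm
  have : mu p = ∑ m ∈ (pabs p).support, (pabs p).coeff m := by
    rw [mu, eval_eq]
    exact Finset.sum_congr rfl fun m _ => by simp
  rw [this]
  have hm' : m ∈ (pabs p).support := by rw [support_pabs]; exact hm
  calc (p.coeff m).natAbs = (pabs p).coeff m := (coeff_pabs p m).symm
    _ ≤ ∑ m ∈ (pabs p).support, (pabs p).coeff m :=
        Finset.single_le_sum (fun _ _ => Nat.zero_le _) hm'

lemma mu_le {k : ℕ} (p : MvPolynomial (Fin k) ℤ) (d : ℕ) (hd : p.totalDegree ≤ d) :
    mu p ≤ (k + 1) ^ d * supNorm p := by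
  classical
  have h := eval_mono_coeff (pabs p) (C (supNorm p) * (onePlus (Fin k)) ^ d) (fun _ => 1)
    (coeff_le_C_mul_onePlus_pow _ _ _
      (fun m hm => by
        rw [coeff_pabs]
        exact Finset.le_sup (f := fun m => (p.coeff m).natAbs) (by rwa [support_pabs] at hm))
      (fun m hm => by
        rw [support_pabs] at hm
        exact le_trans (MvPolynomial.le_totalDegree hm) hd))
  rw [mu]
  refine le_trans h ?_
  have heq : eval (fun _ => (1:ℕ)) (C (supNorm p) * (onePlus (Fin k)) ^ d)
      = supNorm p * (1 + k * 1) ^ d := by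
    rw [map_mul, eval_C, eval_onePlus_pow]
  rw [heq, mul_comm]
  exact Nat.mul_le_mul_right _ (Nat.pow_le_pow_left (by omega) _)

lemma one_le_supNorm {k : ℕ} (p : MvPolynomial (Fin k) ℤ) (hp : p ≠ 0) : 1 ≤ supNorm p := by
  obtain ⟨m, hm⟩ := MvPolynomial.ne_zero_iff.mp hp
  exact le_trans (Int.natAbs_pos.mpr hm)
    (Finset.le_sup (f := fun m => (p.coeff m).natAbs) (MvPolynomial.mem_support_iff.mpr hm))

/-- The main inequality at the level of natural numbers. -/
lemma main_nat {k r : ℕ} (f : Fin r → MvPolynomial (Fin k) ℤ) (hf : ∀ i, f i ≠ 0)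
    (d : ℕ) (hd : ∀ i, (f i).totalDegree ≤ d) (g : MvPolynomial (Fin r) ℤ)
    (N : ℕ) (hN1 : 1 ≤ N) (hN : ∀ i, supNorm (f i) ≤ N) :
    supNorm (aeval f g) ≤
      supNorm g * ((r + 1) * ((k + 1) ^ d * N)) ^ g.totalDegree := by
  classical
  set c : ℕ := (k + 1) ^ d * N with hc
  have hc1 : 1 ≤ c := Nat.one_le_iff_ne_zero.mpr (by positivity)
  calc supNorm (aeval f g) ≤ mu (aeval f g) := supNorm_le_mu _
    _ ≤ eval (fun i => mu (f i)) (pabs g) := mu_aeval_le f g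
    _ ≤ eval (fun _ => c) (pabs g) := by
        refine eval_mono_pt _ _ _ fun i => ?_
        calc mu (f i) ≤ (k + 1) ^ d * supNorm (f i) := mu_le _ _ (hd i)
          _ ≤ (k + 1) ^ d * N := Nat.mul_le_mul_left _ (hN i)
    _ ≤ eval (fun _ => c) (C (supNorm g) * (onePlus (Fin r)) ^ g.totalDegree) := by
        refine eval_mono_coeff _ _ _ ?_
        refine coeff_le_C_mul_onePlus_pow _ _ _ ?_ ?_
        · intro m hm
          rw [coeff_pabs]
          exact Finset.le_sup (f := fun m => (g.coeff m).natAbs) (by rwa [support_pabs] at hm)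
        · intro m hm
          rw [support_pabs] at hm
          exact MvPolynomial.le_totalDegree hm
    _ ≤ supNorm g * ((r + 1) * c) ^ g.totalDegree := by
        rw [map_mul, eval_C, eval_onePlus_pow]
        refine Nat.mul_le_mul_left _ (Nat.pow_le_pow_left ?_ _)
        calc 1 + r * c ≤ c + r * c := by omega
          _ = (r + 1) * c := by ring

end HeightComp

/-- **Height of a composition** (D'Andrea–Krick–Sombra, Lemma 2.37(b)). -/
theorem height_of_composition
    (k r : ℕ) (f : Fin r → MvPolynomial (Fin k) ℤ) (hf : ∀ i, f i ≠ 0)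
    (d : ℕ) (hd : ∀ i, (f i).totalDegree ≤ d)
    (τ : ℝ) (hτ : ∀ i, polyHeight (f i) ≤ τ)
    (g : MvPolynomial (Fin r) ℤ) :
    polyHeight (MvPolynomial.aeval f g) ≤
      polyHeight g + (g.totalDegree : ℝ) *
        (τ + Real.logb 2 ((r : ℝ) + 1) + (d : ℝ) * Real.logb 2 ((k : ℝ) + 1)) := by
  classical
  rcases Nat.eq_zero_or_pos r with hr | hr
  · -- r = 0 : g is a constant
    subst hr
    obtain ⟨a, rfl⟩ := MvPolynomial.C_surjective (Fin 0) g
    have haev : (MvPolynomial.aeval f) (MvPolynomial.C a)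
        = MvPolynomial.C (σ := Fin k) (R := ℤ) a := by
      simp [MvPolynomial.algebraMap_eq]
    rw [haev]
    have : (MvPolynomial.C (σ := Fin 0) (R := ℤ) a).totalDegree = 0 :=
      MvPolynomial.totalDegree_C a
    rw [this]
    have hsn : ∀ n : ℕ, supNorm (MvPolynomial.C (σ := Fin n) (R := ℤ) a) = a.natAbs := by
      intro n
      rcases eq_or_ne a 0 with rfl | ha
      · simp [supNorm]
      · rw [supNorm, MvPolynomial.C_apply, MvPolynomial.support_monomial]
        rw [if_neg ha, Finset.sup_singleton, MvPolynomial.coeff_monomial, if_pos rfl]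
    rw [polyHeight, polyHeight, hsn k, hsn 0]
    simp
  · -- r ≥ 1
    have i₀ : Fin r := ⟨0, hr⟩
    haveI : Nonempty (Fin r) := ⟨i₀⟩
    set N : ℕ := Finset.univ.sup fun i => supNorm (f i) with hNdef
    obtain ⟨j, -, hj⟩ := Finset.exists_mem_eq_sup Finset.univ
      (Finset.univ_nonempty) (fun i => supNorm (f i))
    have hN1 : 1 ≤ N := by
      rw [hNdef]
      exact le_trans (HeightComp.one_le_supNorm _ (hf i₀))
        (Finset.le_sup (f := fun i => supNorm (f i)) (Finset.mem_univ i₀))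
    have hNi : ∀ i, supNorm (f i) ≤ N :=
      fun i => Finset.le_sup (f := fun i => supNorm (f i)) (Finset.mem_univ i)
    have hlogN : Real.logb 2 (N : ℝ) ≤ τ := by
      have : Real.logb 2 (N : ℝ) = polyHeight (f j) := by
        rw [polyHeight, hNdef, hj]
      rw [this]; exact hτ j
    have hτ0 : 0 ≤ τ :=
      le_trans (Real.logb_nonneg one_lt_two (by
        exact_mod_cast HeightComp.one_le_supNorm _ (hf i₀))) (hτ i₀)
    have hmain := HeightComp.main_nat f hf d hd g N hN1 hNi
    set D : ℕ := g.totalDegree with hD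
    -- log bounds
    have hlog_r : (0:ℝ) ≤ Real.logb 2 ((r : ℝ) + 1) :=
      Real.logb_nonneg one_lt_two (by push_cast; linarith [Nat.cast_nonneg (α := ℝ) r])
    have hlog_k : (0:ℝ) ≤ Real.logb 2 ((k : ℝ) + 1) :=
      Real.logb_nonneg one_lt_two (by push_cast; linarith [Nat.cast_nonneg (α := ℝ) k])
    have hbracket : 0 ≤ τ + Real.logb 2 ((r : ℝ) + 1) + (d : ℝ) * Real.logb 2 ((k : ℝ) + 1) := by
      have : (0:ℝ) ≤ (d : ℝ) * Real.logb 2 ((k : ℝ) + 1) :=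
        mul_nonneg (Nat.cast_nonneg d) hlog_k
      linarith
    have hheight_g : 0 ≤ polyHeight g := by
      rw [polyHeight]
      rcases Nat.eq_zero_or_pos (supNorm g) with h | h
      · rw [h]; simp
      · exact Real.logb_nonneg one_lt_two (by exact_mod_cast h)
    rcases Nat.eq_zero_or_pos (supNorm (MvPolynomial.aeval f g)) with hS | hS
    · rw [polyHeight, hS]
      simp only [Nat.cast_zero, Real.logb_zero]
      have : 0 ≤ (D : ℝ) * (τ + Real.logb 2 ((r : ℝ) + 1)
          + (d : ℝ) * Real.logb 2 ((k : ℝ) + 1)) :=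
        mul_nonneg (Nat.cast_nonneg D) hbracket
      linarith
    · have hg1 : 1 ≤ supNorm g := by
        by_contra h
        have : supNorm g = 0 := by omega
        rw [this, zero_mul] at hmain
        omega
      -- pass to logs
      have hcast : (supNorm (MvPolynomial.aeval f g) : ℝ)
          ≤ (supNorm g : ℝ) * (((r:ℝ) + 1) * (((k:ℝ) + 1) ^ d * (N:ℝ))) ^ D := by
        have := hmain
        exact_mod_cast this
      have hpos : (0:ℝ) < (supNorm (MvPolynomial.aeval f g) : ℝ) := by exact_mod_cast hS
      have hlog := Real.logb_le_logb_of_le (b := 2) one_lt_two hpos hcast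
      rw [polyHeight, polyHeight]
      refine le_trans hlog ?_
      have hNpos : (0:ℝ) < (N:ℝ) := by exact_mod_cast hN1
      have hk1 : (0:ℝ) < ((k:ℝ) + 1) := by positivity
      have hr1 : (0:ℝ) < ((r:ℝ) + 1) := by positivity
      have hgpos : (0:ℝ) < (supNorm g : ℝ) := by exact_mod_cast hg1
      have hbase : (0:ℝ) < ((r:ℝ) + 1) * (((k:ℝ) + 1) ^ d * (N:ℝ)) := by positivity
      rw [Real.logb_mul (ne_of_gt hgpos) (by positivity),
        Real.logb_pow,
        Real.logb_mul (ne_of_gt hr1) (by positivity),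
        Real.logb_mul (by positivity) (ne_of_gt hNpos),
        Real.logb_pow]
      have hDnn : (0:ℝ) ≤ (D:ℝ) := Nat.cast_nonneg D
      have : Real.logb 2 ((r:ℝ) + 1) + ((d:ℝ) * Real.logb 2 ((k:ℝ) + 1)
          + Real.logb 2 (N:ℝ))
          ≤ τ + Real.logb 2 ((r : ℝ) + 1) + (d : ℝ) * Real.logb 2 ((k : ℝ) + 1) := by
        linarith
      nlinarith [mul_le_mul_of_nonneg_left this hDnn]
end

section
/- Specialization of Gröbner bases: let 𝒢 ⊆ ℂ[W][X] be a Gröbner basis (with respect to a monomial order <_X on the X-variables, over the field ℂ(W)) of the ideal it generates in ℂ(W)[X]. Let w ∈ ℂ^s be such that for every g ∈ 𝒢 the leading coefficient of g with respect to <_X (an element of ℂ[W]) does not vanish at w. Then 𝒢(w) = {g(w,X) : g ∈ 𝒢} is a Gröbner basis, with respect to <_X, of the ideal ⟨g(w,X) : g ∈ 𝒢⟩ ⊆ ℂ[X]. -/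
/-!
Lift `f` in the specialized ideal to `F` in the `ℂ[W]`-ideal spanned by `𝒢`. Over `ℂ(W)` some
`g ∈ 𝒢` has `lm g ∣ lm F`. If `lc F` does not vanish at `w`, then `lm F(w) = lm F` and `g(w)`
works. Otherwise the S-polynomial `lc(g) F - lc(F) X^(lm F - lm g) g` lies in the same ideal,
has a strictly smaller leading monomial, and specializes to `lc(g)(w) • F(w)`, so well-founded
induction on the monomial order applies.
-/

open MvPolynomial

/-- The leading exponent (multidegree) of a multivariate polynomial with respect to a
monomial order `m`. -/
noncomputable def lmDeg {n : ℕ} (m : MonomialOrder (Fin n)) {R : Type*} [CommSemiring R]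
    (f : MvPolynomial (Fin n) R) : Fin n →₀ ℕ :=
  m.toSyn.symm (f.support.sup fun d => m.toSyn d)

/-- `G` is a Gröbner basis of the ideal `I` with respect to the monomial order `m`:
`G ⊆ I` and the leading monomial of every nonzero element of `I` is divisible by the
leading monomial of some nonzero element of `G`. -/
def IsGroebnerBasis {n : ℕ} (m : MonomialOrder (Fin n)) {F : Type*} [Field F]
    (I : Ideal (MvPolynomial (Fin n) F)) (G : Set (MvPolynomial (Fin n) F)) : Prop :=
  (∀ g ∈ G, g ∈ I) ∧ ∀ f ∈ I, f ≠ 0 → ∃ g ∈ G, g ≠ 0 ∧ lmDeg m g ≤ lmDeg m f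

namespace MonomialOrder

variable {σ : Type*} (m : MonomialOrder σ)

section Map

variable {R S : Type*} [CommSemiring R] [CommSemiring S]

theorem degree_map_of_leadingCoeff_ne_zero {φ : R →+* S} {f : MvPolynomial σ R}
    (h : φ (m.leadingCoeff f) ≠ 0) : m.degree (f.map φ) = m.degree f :=
  m.toSyn.injective <| le_antisymm
    (m.degree_le_iff.mpr fun _ hc => le_degree (support_map_subset φ f hc))
    (le_degree (m := m) (by rwa [mem_support_iff, coeff_map]))

theorem degree_map_of_injective {φ : R →+* S} (hφ : Function.Injective φ)
    (f : MvPolynomial σ R) : m.degree (f.map φ) = m.degree f := by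
  rcases eq_or_ne f 0 with rfl | hf
  · simp only [map_zero, degree_zero]
  · exact m.degree_map_of_leadingCoeff_ne_zero
      ((map_ne_zero_iff φ hφ).mpr (m.leadingCoeff_ne_zero_iff.mpr hf))

end Map

section SPolynomial

variable {R S : Type*} [CommRing R] [CommRing S] {f g : MvPolynomial σ R}

theorem degree_sPolynomial_lt_of_degree_le (h : m.degree g ≤ m.degree f)
    (hs : m.sPolynomial f g ≠ 0) : m.degree (m.sPolynomial f g) ≺[m] m.degree f := by
  simpa [sup_eq_left.mpr h] using m.degree_sPolynomial_lt_sup_degree hs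

theorem map_sPolynomial_of_degree_le (φ : R →+* S) (h : m.degree g ≤ m.degree f)
    (hf : φ (m.leadingCoeff f) = 0) :
    (m.sPolynomial f g).map φ = φ (m.leadingCoeff g) • f.map φ := by
  rw [sPolynomial, map_sub, map_mul, map_mul, map_monomial, map_monomial, hf, monomial_zero,
    zero_mul, sub_zero, tsub_eq_zero_of_le h, ← C_apply, C_mul']

theorem sPolynomial_mem_span {G : Set (MvPolynomial σ R)} (hf : f ∈ Ideal.span G)
    (hg : g ∈ G) : m.sPolynomial f g ∈ Ideal.span G :=
  Ideal.sub_mem _ (Ideal.mul_mem_left _ _ hf) (Ideal.mul_mem_left _ _ (Ideal.subset_span hg))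

end SPolynomial

variable {R k : Type*} [CommRing R] [CommRing k] [IsDomain k]

theorem exists_degree_le_degree_map {φ : R →+* k} {G : Set (MvPolynomial σ R)}
    (hlc : ∀ g ∈ G, φ (m.leadingCoeff g) ≠ 0)
    (hdiv : ∀ F ∈ Ideal.span G, F ≠ 0 → ∃ g ∈ G, m.degree g ≤ m.degree F)
    {F : MvPolynomial σ R} (hF : F ∈ Ideal.span G) (hF0 : F.map φ ≠ 0) :
    ∃ g ∈ G, m.degree g ≤ m.degree (F.map φ) := by
  induction hd : m.toSyn (m.degree F) using WellFoundedLT.induction generalizing F with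
  | ind d ih =>
  obtain ⟨g, hgG, hgF⟩ := hdiv F hF (by rintro rfl; exact hF0 (map_zero _))
  by_cases hlcF : φ (m.leadingCoeff F) = 0
  · have hmap := m.map_sPolynomial_of_degree_le φ hgF hlcF
    have hS0 : (m.sPolynomial F g).map φ ≠ 0 := by
      rw [hmap]; exact smul_ne_zero (hlc g hgG) hF0
    have hlt : m.toSyn (m.degree (m.sPolynomial F g)) < d :=
      hd ▸ m.degree_sPolynomial_lt_of_degree_le hgF fun h => hS0 (by rw [h, map_zero])
    obtain ⟨g', hg'G, hg'⟩ := ih _ hlt (m.sPolynomial_mem_span hF hgG) hS0 rfl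
    rw [hmap, degree_smul_of_isRegular (IsRegular.of_ne_zero (hlc g hgG))] at hg'
    exact ⟨g', hg'G, hg'⟩
  · exact ⟨g, hgG, (m.degree_map_of_leadingCoeff_ne_zero hlcF).symm ▸ hgF⟩

end MonomialOrder

open MonomialOrder

section GroebnerBasis

variable {n : ℕ} (m : MonomialOrder (Fin n))

theorem lmDeg_eq_degree {R : Type*} [CommSemiring R] (f : MvPolynomial (Fin n) R) :
    lmDeg m f = m.degree f :=
  rfl

theorem exists_degree_le_of_isGroebnerBasis_image_map {R K : Type*} [CommRing R] [Field K]
    {φ : R →+* K} (hφ : Function.Injective φ) {G : Set (MvPolynomial (Fin n) R)}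
    (hGB : IsGroebnerBasis m (Ideal.span (map φ '' G)) (map φ '' G))
    {F : MvPolynomial (Fin n) R} (hF : F ∈ Ideal.span G) (hF0 : F ≠ 0) :
    ∃ g ∈ G, m.degree g ≤ m.degree F := by
  have hFK : F.map φ ∈ Ideal.span (map φ '' G) := by
    rw [← Ideal.map_span]; exact Ideal.mem_map_of_mem _ hF
  obtain ⟨_, ⟨g, hgG, rfl⟩, -, hgF⟩ :=
    hGB.2 _ hFK ((map_ne_zero_iff _ (map_injective φ hφ)).mpr hF0)
  simp only [lmDeg_eq_degree, degree_map_of_injective m hφ] at hgF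
  exact ⟨g, hgG, hgF⟩

theorem isGroebnerBasis_image_map {R k : Type*} [CommRing R] [Field k] {φ : R →+* k}
    (hφ : Function.Surjective φ) {G : Set (MvPolynomial (Fin n) R)}
    (hlc : ∀ g ∈ G, φ (m.leadingCoeff g) ≠ 0)
    (hdiv : ∀ F ∈ Ideal.span G, F ≠ 0 → ∃ g ∈ G, m.degree g ≤ m.degree F) :
    IsGroebnerBasis m (Ideal.span (map φ '' G)) (map φ '' G) := by
  refine ⟨fun _ hg => Ideal.subset_span hg, fun f hf hf0 => ?_⟩
  rw [← Ideal.map_span, Ideal.mem_map_iff_of_surjective _ (map_surjective φ hφ)] at hf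
  obtain ⟨F, hF, rfl⟩ := hf
  obtain ⟨g, hgG, hgF⟩ := m.exists_degree_le_degree_map hlc hdiv hF hf0
  have hgφ : (g.map φ).coeff (m.degree g) ≠ 0 := by rw [coeff_map]; exact hlc g hgG
  refine ⟨g.map φ, ⟨g, hgG, rfl⟩, fun h => hgφ (by rw [h, coeff_zero]), ?_⟩
  rwa [lmDeg_eq_degree, lmDeg_eq_degree, m.degree_map_of_leadingCoeff_ne_zero (hlc g hgG)]

end GroebnerBasis

/-- **Specialization of Gröbner bases** (Lemma `spe BG`). Let `𝒢 ⊆ ℂ[W][X]` be a Gröbner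
basis, with respect to a monomial order `<_X` on the `X`-monomials, of the ideal it
generates in `ℂ(W)[X]`. If `w ∈ ℂ^s` is such that no leading coefficient (an element of
`ℂ[W]`) of an element of `𝒢` vanishes at `w`, then `𝒢(w) = {g(w,X) : g ∈ 𝒢}` is a Gröbner
basis, for `<_X`, of the ideal it generates in `ℂ[X]`. -/
theorem groebner_basis_specialization
    (s n : ℕ) (m : MonomialOrder (Fin n))
    (G : Set (MvPolynomial (Fin n) (MvPolynomial (Fin s) ℂ)))
    (hGB : IsGroebnerBasis m
      (Ideal.span ((fun g => g.map (algebraMap (MvPolynomial (Fin s) ℂ)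
          (FractionRing (MvPolynomial (Fin s) ℂ)))) '' G))
      ((fun g => g.map (algebraMap (MvPolynomial (Fin s) ℂ)
          (FractionRing (MvPolynomial (Fin s) ℂ)))) '' G))
    (w : Fin s → ℂ)
    (hw : ∀ g ∈ G, MvPolynomial.eval w (g.coeff (lmDeg m g)) ≠ 0) :
    IsGroebnerBasis m
      (Ideal.span ((fun g => g.map (MvPolynomial.eval w)) '' G))
      ((fun g => g.map (MvPolynomial.eval w)) '' G) :=
  isGroebnerBasis_image_map m (fun a => ⟨C a, eval_C a⟩) hw fun _ hF hF0 =>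
    exists_degree_le_of_isGroebnerBasis_image_map m (IsFractionRing.injective _ _) hGB hF hF0
end

section
/- Specialization of normal forms: with 𝒢 as above a Gröbner basis over ℂ(W) for <_X, and w ∈ ℂ^s avoiding all zeros of leading coefficients of elements of 𝒢, let v ∈ ℂ(W)[X] be such that all reductions of v by 𝒢 involve no denominator vanishing at w. Then NF_{𝒢(w)}(φ_w(v)) = φ_w(NF_𝒢(v)), i.e. the normal form of the specialization equals the specialization of the normal form. -/
open MvPolynomial

/-- The multiplicative set of polynomials in the parameters `W` not vanishing at `w`. -/
noncomputable def nonVanishingAt {s : ℕ} (w : Fin s → ℂ) :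
    Submonoid (MvPolynomial (Fin s) ℂ) where
  carrier := {p | MvPolynomial.eval w p ≠ 0}
  mul_mem' {a b} ha hb := by
    simp only [Set.mem_setOf_eq, map_mul] at *
    exact mul_ne_zero ha hb
  one_mem' := by simp

/-- Evaluation at `w` of a rational function whose denominator does not vanish at `w`. -/
noncomputable def evalRatAt {s : ℕ} (w : Fin s → ℂ) :
    Localization (nonVanishingAt w) →+* ℂ :=
  IsLocalization.lift (M := nonVanishingAt w) (S := Localization (nonVanishingAt w))
    (g := MvPolynomial.eval w) (fun y => isUnit_iff_ne_zero.mpr y.2)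

-- aux lemmas
lemma le_lmDeg {n : ℕ} (m : MonomialOrder (Fin n)) {R : Type*} [CommSemiring R]
    {f : MvPolynomial (Fin n) R} {d : Fin n →₀ ℕ} (hd : d ∈ f.support) :
    m.toSyn d ≤ m.toSyn (lmDeg m f) := by
  unfold lmDeg
  rw [AddEquiv.apply_symm_apply]
  exact Finset.le_sup hd

lemma lmDeg_mem_support {n : ℕ} (m : MonomialOrder (Fin n)) {R : Type*} [CommSemiring R]
    {f : MvPolynomial (Fin n) R} (hf : f ≠ 0) : lmDeg m f ∈ f.support := by
  obtain ⟨b, hb, hsup⟩ := Finset.exists_mem_eq_sup f.support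
    (MvPolynomial.support_nonempty.mpr hf) (fun d => m.toSyn d)
  unfold lmDeg
  rw [hsup, AddEquiv.symm_apply_apply]
  exact hb

lemma lmDeg_map_of_injective {n : ℕ} (m : MonomialOrder (Fin n)) {R S : Type*} [CommSemiring R]
    [CommSemiring S] {f : R →+* S} (hf : Function.Injective f) (p : MvPolynomial (Fin n) R) :
    lmDeg m (p.map f) = lmDeg m p := by
  unfold lmDeg
  rw [MvPolynomial.support_map_of_injective p hf]

lemma mem_nonVanishingAt {s : ℕ} {w : Fin s → ℂ} {p : MvPolynomial (Fin s) ℂ}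
    (hp : MvPolynomial.eval w p ≠ 0) : p ∈ nonVanishingAt w := hp

lemma nonVanishingAt_le_nonZeroDivisors {s : ℕ} (w : Fin s → ℂ) :
    nonVanishingAt w ≤ nonZeroDivisors (MvPolynomial (Fin s) ℂ) := by
  intro p hp
  have hp' : MvPolynomial.eval w p ≠ 0 := hp
  exact mem_nonZeroDivisors_of_ne_zero (fun h => hp' (by simp [h]))

noncomputable def toFrac {s : ℕ} (w : Fin s → ℂ) :
    Localization (nonVanishingAt w) →+* FractionRing (MvPolynomial (Fin s) ℂ) :=
  IsLocalization.map (M := nonVanishingAt w) (T := nonZeroDivisors (MvPolynomial (Fin s) ℂ))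
    (FractionRing (MvPolynomial (Fin s) ℂ)) (RingHom.id _)
    (fun x hx => nonVanishingAt_le_nonZeroDivisors w hx)

lemma toFrac_comp {s : ℕ} (w : Fin s → ℂ) :
    (toFrac w).comp (algebraMap (MvPolynomial (Fin s) ℂ) (Localization (nonVanishingAt w)))
      = algebraMap (MvPolynomial (Fin s) ℂ) (FractionRing (MvPolynomial (Fin s) ℂ)) := by
  exact (IsLocalization.map_comp _).trans (RingHom.comp_id _)

set_option synthInstance.maxHeartbeats 1000000 in
lemma toFrac_injective {s : ℕ} (w : Fin s → ℂ) : Function.Injective (toFrac w) := by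
  rw [injective_iff_map_eq_zero]
  intro x hx
  obtain ⟨⟨p, q⟩, hpq⟩ := IsLocalization.surj (nonVanishingAt w) x
  have h1 : toFrac w (x * algebraMap _ _ (q : MvPolynomial (Fin s) ℂ)) = toFrac w (algebraMap _ _ p) := by
    rw [hpq]
  rw [map_mul, hx, zero_mul] at h1
  have h2 : toFrac w (algebraMap _ _ p) = algebraMap (MvPolynomial (Fin s) ℂ) _ p :=
    RingHom.congr_fun (toFrac_comp w) p
  have hp0 : p = 0 := by
    have h3 := h1.symm
    rw [h2] at h3
    exact IsFractionRing.to_map_eq_zero_iff.mp h3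
  rw [hp0, map_zero] at hpq
  have hu : IsUnit (algebraMap (MvPolynomial (Fin s) ℂ) (Localization (nonVanishingAt w)) q) :=
    IsLocalization.map_units _ q
  exact (hu.mul_left_eq_zero).mp hpq

lemma evalRatAt_algebraMap {s : ℕ} (w : Fin s → ℂ) (a : MvPolynomial (Fin s) ℂ) :
    evalRatAt w (algebraMap _ (Localization (nonVanishingAt w)) a) = MvPolynomial.eval w a :=
  IsLocalization.lift_eq _ _

lemma evalRatAt_surjective {s : ℕ} (w : Fin s → ℂ) : Function.Surjective (evalRatAt w) :=
  fun c => ⟨algebraMap _ _ (MvPolynomial.C c), by rw [evalRatAt_algebraMap]; simp⟩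

lemma evalRatAt_comp {s : ℕ} (w : Fin s → ℂ) :
    (evalRatAt w).comp (algebraMap (MvPolynomial (Fin s) ℂ) (Localization (nonVanishingAt w)))
      = (MvPolynomial.eval w : MvPolynomial (Fin s) ℂ →+* ℂ) :=
  IsLocalization.lift_comp _

set_option maxHeartbeats 4000000 in
set_option synthInstance.maxHeartbeats 1000000 in
lemma key_specialization
    (s n : ℕ) (m : MonomialOrder (Fin n))
    (G : Finset (MvPolynomial (Fin n) (MvPolynomial (Fin s) ℂ)))
    (hGB : IsGroebnerBasis m
      (Ideal.span ((fun g : MvPolynomial (Fin n) (MvPolynomial (Fin s) ℂ) =>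
          g.map (algebraMap (MvPolynomial (Fin s) ℂ)
            (FractionRing (MvPolynomial (Fin s) ℂ)))) '' (G : Set (MvPolynomial (Fin n) (MvPolynomial (Fin s) ℂ)))))
      ((fun g : MvPolynomial (Fin n) (MvPolynomial (Fin s) ℂ) =>
          g.map (algebraMap (MvPolynomial (Fin s) ℂ)
            (FractionRing (MvPolynomial (Fin s) ℂ)))) '' (G : Set (MvPolynomial (Fin n) (MvPolynomial (Fin s) ℂ)))))
    (w : Fin s → ℂ)
    (hw : ∀ g ∈ G, MvPolynomial.eval w (g.coeff (lmDeg m g)) ≠ 0)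
    (F : MvPolynomial (Fin n) (Localization (nonVanishingAt w)))
    (hFI : F ∈ Ideal.span ((fun g : MvPolynomial (Fin n) (MvPolynomial (Fin s) ℂ) =>
          g.map (algebraMap (MvPolynomial (Fin s) ℂ) (Localization (nonVanishingAt w)))) ''
          (G : Set (MvPolynomial (Fin n) (MvPolynomial (Fin s) ℂ)))))
    (hFred : ∀ d ∈ (F.map (evalRatAt w)).support, ∀ g ∈ G, ¬ lmDeg m g ≤ d) :
    F.map (evalRatAt w) = 0 := by
  classical
  set IL : Ideal (MvPolynomial (Fin n) (Localization (nonVanishingAt w))) :=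
    Ideal.span ((fun g : MvPolynomial (Fin n) (MvPolynomial (Fin s) ℂ) => g.map (algebraMap (MvPolynomial (Fin s) ℂ) (Localization (nonVanishingAt w)))) ''
      (G : Set (MvPolynomial (Fin n) (MvPolynomial (Fin s) ℂ)))) with hIL
  have main : ∀ t : m.syn, ∀ F : MvPolynomial (Fin n) (Localization (nonVanishingAt w)), F ∈ IL →
      m.toSyn (lmDeg m F) ≤ t →
      (∀ d ∈ (F.map (evalRatAt w)).support, ∀ g ∈ G, ¬ lmDeg m g ≤ d) →
      F.map (evalRatAt w) = 0 := by
    intro t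
    induction t using WellFoundedLT.induction with
    | _ t IH =>
      intro F hFI hFt hFred
      by_cases hF0 : F = 0
      · rw [hF0]; exact map_zero _
      have hδmem : lmDeg m F ∈ F.support := lmDeg_mem_support m hF0
      -- find a divisor of the leading monomial using the Gröbner basis property over K
      have hA : ∃ g₀ ∈ G, lmDeg m g₀ ≤ lmDeg m F := by
        have hinjK : Function.Injective (algebraMap (MvPolynomial (Fin s) ℂ) (FractionRing (MvPolynomial (Fin s) ℂ))) :=
          IsFractionRing.injective _ _
        have hFK0 : F.map (toFrac w) ≠ 0 := by
          intro h
          exact hF0 (MvPolynomial.map_injective _ (toFrac_injective w) (by rw [h, map_zero]))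
        have hFK : F.map (toFrac w) ∈ Ideal.span
            ((fun g : MvPolynomial (Fin n) (MvPolynomial (Fin s) ℂ) => g.map (algebraMap (MvPolynomial (Fin s) ℂ) (FractionRing (MvPolynomial (Fin s) ℂ)))) ''
              (G : Set (MvPolynomial (Fin n) (MvPolynomial (Fin s) ℂ)))) := by
          have h1 : (MvPolynomial.map (toFrac w)) F ∈
              Ideal.map (MvPolynomial.map (toFrac w)) IL :=
            Ideal.mem_map_of_mem _ hFI
          rw [hIL, Ideal.map_span, ← Set.image_comp] at h1
          have himg : (fun p : MvPolynomial (Fin n) (Localization (nonVanishingAt w)) => (MvPolynomial.map (toFrac w)) p) ∘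
              (fun g : MvPolynomial (Fin n) (MvPolynomial (Fin s) ℂ) => g.map (algebraMap (MvPolynomial (Fin s) ℂ) (Localization (nonVanishingAt w)))) =
              fun g : MvPolynomial (Fin n) (MvPolynomial (Fin s) ℂ) => g.map (algebraMap (MvPolynomial (Fin s) ℂ) (FractionRing (MvPolynomial (Fin s) ℂ))) := by
            funext g
            show (g.map (algebraMap (MvPolynomial (Fin s) ℂ) (Localization (nonVanishingAt w)))).map (toFrac w) = _
            rw [MvPolynomial.map_map, toFrac_comp]
          rwa [himg] at h1
        obtain ⟨gK, hgK, hgKne, hgKle⟩ := hGB.2 _ hFK hFK0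
        obtain ⟨g₀, hg₀G, rfl⟩ := hgK
        refine ⟨g₀, hg₀G, ?_⟩
        rwa [lmDeg_map_of_injective m hinjK, lmDeg_map_of_injective m (toFrac_injective w)] at hgKle
      obtain ⟨g₀, hg₀G, hg₀le⟩ := hA
      by_cases hc : evalRatAt w (F.coeff (lmDeg m F)) = 0
      · -- leading coefficient vanishes: subtract a multiple of g₀ and recurse
        have huu : IsUnit (algebraMap (MvPolynomial (Fin s) ℂ) (Localization (nonVanishingAt w)) (g₀.coeff (lmDeg m g₀))) :=
          IsLocalization.map_units _ ⟨_, mem_nonVanishingAt (hw g₀ hg₀G)⟩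
        set U := huu.unit with hU
        set e := lmDeg m F - lmDeg m g₀ with he
        have hee : e + lmDeg m g₀ = lmDeg m F := tsub_add_cancel_of_le hg₀le
        set a : Localization (nonVanishingAt w) := F.coeff (lmDeg m F) * ↑U⁻¹ with ha
        set T := (MvPolynomial.monomial e a) * g₀.map (algebraMap (MvPolynomial (Fin s) ℂ) (Localization (nonVanishingAt w))) with hT
        have hTI : T ∈ IL :=
          Ideal.mul_mem_left _ _ (Ideal.subset_span ⟨g₀, hg₀G, rfl⟩)
        set F' := F - T with hF'
        have hF'I : F' ∈ IL := by rw [hF']; exact Ideal.sub_mem (α := MvPolynomial (Fin n) (Localization (nonVanishingAt w))) IL hFI hTI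
        have hφa : evalRatAt w a = 0 := by
          rw [ha, map_mul, hc, zero_mul]
        have hφT : T.map (evalRatAt w) = 0 := by
          show (MvPolynomial.map (evalRatAt w)) T = 0
          rw [hT, map_mul, MvPolynomial.map_monomial, hφa, MvPolynomial.monomial_zero, zero_mul]
        have hφF' : F'.map (evalRatAt w) = F.map (evalRatAt w) := by
          show (MvPolynomial.map (evalRatAt w)) F' = _
          rw [hF', map_sub, hφT, sub_zero]
        have hcT : T.coeff (lmDeg m F) = F.coeff (lmDeg m F) := by
          rw [hT, ← hee, MvPolynomial.coeff_monomial_mul, MvPolynomial.coeff_map, ha]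
          have : (algebraMap (MvPolynomial (Fin s) ℂ) (Localization (nonVanishingAt w))) (g₀.coeff (lmDeg m g₀)) = ↑U := (IsUnit.unit_spec huu).symm
          rw [this, Units.inv_mul_cancel_right, hee]
        have hδF' : lmDeg m F ∉ F'.support := by
          rw [MvPolynomial.mem_support_iff]
          push_neg
          rw [hF', MvPolynomial.coeff_sub, hcT, sub_self]
        have hbound : ∀ d ∈ F'.support, m.toSyn d ≤ m.toSyn (lmDeg m F) := by
          intro d hd
          rcases Finset.mem_union.mp (MvPolynomial.support_sub _ F T hd) with h | h
          · exact le_lmDeg m h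
          · have h2 := MvPolynomial.support_mul _ _ h
            rw [Finset.mem_add] at h2
            obtain ⟨u, hu, vv, hv, rfl⟩ := h2
            have hue : u = e := by
              have := MvPolynomial.support_monomial_subset hu
              simpa using this
            have hv' : m.toSyn vv ≤ m.toSyn (lmDeg m g₀) :=
              le_lmDeg m (MvPolynomial.support_map_subset _ _ hv)
            calc m.toSyn (u + vv) = m.toSyn u + m.toSyn vv := map_add _ _ _
              _ ≤ m.toSyn u + m.toSyn (lmDeg m g₀) := by
                  exact add_le_add_right hv' _
              _ = m.toSyn (e + lmDeg m g₀) := by rw [hue, map_add]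
              _ = m.toSyn (lmDeg m F) := by rw [hee]
        by_cases hF'0 : F' = 0
        · rw [← hφF', hF'0]; exact map_zero _
        · have hlt : m.toSyn (lmDeg m F') < m.toSyn (lmDeg m F) := by
            have hmem := lmDeg_mem_support m hF'0
            refine lt_of_le_of_ne (hbound _ hmem) ?_
            intro heq
            exact hδF' (by rwa [m.toSyn.injective heq] at hmem)
          rw [← hφF']
          exact IH (m.toSyn (lmDeg m F')) (lt_of_lt_of_le hlt hFt) F' hF'I le_rfl
            (by rw [hφF']; exact hFred)
      · -- leading coefficient survives: contradiction with reducedness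
        exfalso
        have hmem : lmDeg m F ∈ (F.map (evalRatAt w)).support := by
          rw [MvPolynomial.mem_support_iff, MvPolynomial.coeff_map]
          exact hc
        exact hFred _ hmem g₀ hg₀G hg₀le
  exact main (m.toSyn (lmDeg m F)) F hFI le_rfl hFred

set_option maxHeartbeats 4000000
set_option synthInstance.maxHeartbeats 1000000

/-- **Specialization of normal forms** (Proposition `specialization normal forms`).
Let `𝒢 ⊆ ℂ[W][X]` be a Gröbner basis over `ℂ(W)` whose leading coefficients do not vanish
at `w`, and let `v` be a polynomial whose reduction `v = ∑_g v_g·g + r` by `𝒢` involves no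
denominator vanishing at `w` (all coefficients lie in the localization at `w`), with `r`
reduced with respect to `𝒢`. Then the normal form of the specialization `φ_w(v)` with
respect to `𝒢(w)` equals the specialization `φ_w(r)` of the normal form: any polynomial
`r'` that is reduced w.r.t. `𝒢(w)` and congruent to `φ_w(v)` modulo `⟨𝒢(w)⟩` equals `φ_w(r)`. -/
theorem normal_form_specialization
    (s n : ℕ) (m : MonomialOrder (Fin n))
    (G : Finset (MvPolynomial (Fin n) (MvPolynomial (Fin s) ℂ)))
    (hGB : IsGroebnerBasis m
      (Ideal.span ((fun g : MvPolynomial (Fin n) (MvPolynomial (Fin s) ℂ) =>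
          g.map (algebraMap (MvPolynomial (Fin s) ℂ)
            (FractionRing (MvPolynomial (Fin s) ℂ)))) '' (G : Set (MvPolynomial (Fin n) (MvPolynomial (Fin s) ℂ)))))
      ((fun g : MvPolynomial (Fin n) (MvPolynomial (Fin s) ℂ) =>
          g.map (algebraMap (MvPolynomial (Fin s) ℂ)
            (FractionRing (MvPolynomial (Fin s) ℂ)))) '' (G : Set (MvPolynomial (Fin n) (MvPolynomial (Fin s) ℂ)))))
    (w : Fin s → ℂ)
    (hw : ∀ g ∈ G, MvPolynomial.eval w (g.coeff (lmDeg m g)) ≠ 0)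
    (v r : MvPolynomial (Fin n) (Localization (nonVanishingAt w)))
    (vg : MvPolynomial (Fin n) (MvPolynomial (Fin s) ℂ) →
      MvPolynomial (Fin n) (Localization (nonVanishingAt w)))
    (hdecomp : v = (∑ g ∈ G, vg g *
      g.map (algebraMap (MvPolynomial (Fin s) ℂ) (Localization (nonVanishingAt w)))) + r)
    (hred : ∀ d ∈ r.support, ∀ g ∈ G, g ≠ 0 → ¬ lmDeg m g ≤ d) :
    ∀ r' : MvPolynomial (Fin n) ℂ,
      v.map (evalRatAt w) - r' ∈
        Ideal.span ((fun g : MvPolynomial (Fin n) (MvPolynomial (Fin s) ℂ) =>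
          g.map (MvPolynomial.eval w)) '' (G : Set (MvPolynomial (Fin n) (MvPolynomial (Fin s) ℂ)))) →
      (∀ d ∈ r'.support, ∀ g ∈ G, g ≠ 0 → ¬ lmDeg m g ≤ d) →
      r' = r.map (evalRatAt w) := by
    classical
  intro r' hr'mem hr'red
  set IL : Ideal (MvPolynomial (Fin n) (Localization (nonVanishingAt w))) :=
    Ideal.span ((fun g : MvPolynomial (Fin n) (MvPolynomial (Fin s) ℂ) =>
      g.map (algebraMap (MvPolynomial (Fin s) ℂ) (Localization (nonVanishingAt w)))) ''
      (G : Set (MvPolynomial (Fin n) (MvPolynomial (Fin s) ℂ)))) with hIL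
  have hGne : ∀ g ∈ G, g ≠ 0 := by
    intro g hg h0
    exact hw g hg (by rw [h0]; simp)
  -- the specialized ideal is the image of IL
  have hΦs : Function.Surjective (MvPolynomial.map (evalRatAt w) :
      MvPolynomial (Fin n) (Localization (nonVanishingAt w)) →+* MvPolynomial (Fin n) ℂ) :=
    MvPolynomial.map_surjective _ (evalRatAt_surjective w)
  have hJ : Ideal.span ((fun g : MvPolynomial (Fin n) (MvPolynomial (Fin s) ℂ) =>
        g.map (MvPolynomial.eval w)) '' (G : Set (MvPolynomial (Fin n) (MvPolynomial (Fin s) ℂ))))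
      = Ideal.map (MvPolynomial.map (evalRatAt w)) IL := by
    rw [hIL, Ideal.map_span, ← Set.image_comp]
    have himg : (fun p : MvPolynomial (Fin n) (Localization (nonVanishingAt w)) =>
        (MvPolynomial.map (evalRatAt w)) p) ∘
        (fun g : MvPolynomial (Fin n) (MvPolynomial (Fin s) ℂ) =>
          g.map (algebraMap (MvPolynomial (Fin s) ℂ) (Localization (nonVanishingAt w)))) =
        fun g : MvPolynomial (Fin n) (MvPolynomial (Fin s) ℂ) => g.map (MvPolynomial.eval w) := by
      funext g
      show (g.map (algebraMap (MvPolynomial (Fin s) ℂ) (Localization (nonVanishingAt w)))).map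
        (evalRatAt w) = _
      rw [MvPolynomial.map_map, evalRatAt_comp]
    rw [himg]
  rw [hJ, Ideal.mem_map_iff_of_surjective _ hΦs] at hr'mem
  obtain ⟨F₁, hF₁I, hF₁⟩ := hr'mem
  set S : MvPolynomial (Fin n) (Localization (nonVanishingAt w)) := ∑ g ∈ G, vg g *
      g.map (algebraMap (MvPolynomial (Fin s) ℂ) (Localization (nonVanishingAt w))) with hS
  have hSI : S ∈ IL := by
    rw [hS]
    refine Ideal.sum_mem _ (fun g hg => ?_)
    exact Ideal.mul_mem_left _ _ (Ideal.subset_span ⟨g, hg, rfl⟩)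
  set F : MvPolynomial (Fin n) (Localization (nonVanishingAt w)) := F₁ - S with hF
  have hFI : F ∈ IL := by
    rw [hF]
    exact Ideal.sub_mem (α := MvPolynomial (Fin n) (Localization (nonVanishingAt w))) IL hF₁I hSI
  have hΦF : F.map (evalRatAt w) = r.map (evalRatAt w) - r' := by
    show (MvPolynomial.map (evalRatAt w)) F = _
    rw [hF, map_sub, hF₁]
    have hv : (MvPolynomial.map (evalRatAt w)) v =
        (MvPolynomial.map (evalRatAt w)) S + (MvPolynomial.map (evalRatAt w)) r := by
      rw [hdecomp]; exact map_add _ _ _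
    rw [hv]
    ring
  have hredF : ∀ d ∈ (F.map (evalRatAt w)).support, ∀ g ∈ G, ¬ lmDeg m g ≤ d := by
    intro d hd g hg
    rw [hΦF] at hd
    rcases Finset.mem_union.mp (MvPolynomial.support_sub _ _ _ hd) with h | h
    · exact hred d (MvPolynomial.support_map_subset _ _ h) g hg (hGne g hg)
    · exact hr'red d h g hg (hGne g hg)
  have h0 := key_specialization s n m G hGB w hw F hFI hredF
  rw [hΦF] at h0
  exact (sub_eq_zero.mp h0).symm
end
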